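/- Define f : ℝ² → ℝ by f(x) = |x₁| + |x₂|, F(x) = (x₁, x₂), and for Δ ∈ (0,1) define F̃_Δ(x) = (x₁ + Δ² x₂, x₂ + Δ² x₁) and f̃_Δ(x) = |x₁ + Δ² x₂| + |x₂ + Δ² x₁|. Then: (i) {F̃_Δ : Δ ∈ (0,1)} are fully linear models of F at x̄ = (0,0) with constants κ_F = 1 and κ_G = 1, and F̃_Δ(0,0) = F(0,0); (ii) for any ε > 0 and Δ ∈ (0,1), f̃_Δ is differentiable at (ε, 0) with gradient (1 + Δ², 1 + Δ²); (iii) the convex subdifferential of f at (ε, 0) equals {v : v₁ = 1, v₂ ∈ [−1,1]}, so (1, −1) ∈ ∂f(ε, 0); and (iv) the Euclidean distance from (1, −1) to (1 + Δ², 1 + Δ²) is at least 2 for every Δ ∈ (0,1), and hence does not converge to 0 as Δ → 0. -/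

import Mathlib

open Metric Set Filter

/-- `f(x) = |x₁| + |x₂|`. -/
def f11 (x : EuclideanSpace ℝ (Fin 2)) : ℝ := |x 0| + |x 1|

/-- `F(x) = (x₁, x₂)`, given by components. -/
def F11 (i : Fin 2) (x : EuclideanSpace ℝ (Fin 2)) : ℝ := x i

/-- `F̃_Δ(x) = (x₁ + Δ² x₂, x₂ + Δ² x₁)`, given by components. -/
noncomputable def Ft11 (Δ : ℝ) (i : Fin 2) (x : EuclideanSpace ℝ (Fin 2)) : ℝ :=
  if i = 0 then x 0 + Δ ^ 2 * x 1 else x 1 + Δ ^ 2 * x 0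

/-- `f̃_Δ(x) = |x₁ + Δ² x₂| + |x₂ + Δ² x₁|`. -/
def ft11 (Δ : ℝ) (x : EuclideanSpace ℝ (Fin 2)) : ℝ :=
  |x 0 + Δ ^ 2 * x 1| + |x 1 + Δ ^ 2 * x 0|

/-- The convex subdifferential of a real-valued function `h` at `x̄`:
`{v : h(x) ≥ h(x̄) + ⟨v, x − x̄⟩ for all x}`. -/
def rSubdiff11 (h : EuclideanSpace ℝ (Fin 2) → ℝ) (xbar : EuclideanSpace ℝ (Fin 2)) :
    Set (EuclideanSpace ℝ (Fin 2)) :=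
  {v | ∀ x, h xbar + (inner ℝ v (x - xbar) : ℝ) ≤ h x}

/-! The model error `F - F̃_Δ` is the linear map `y ↦ -Δ² (y₂, y₁)`, so on the ball of radius
`Δ < 1` the value error is at most `Δ³ ≤ Δ²` and the gradient error is `Δ² ≤ Δ`. At `(ε, 0)` both
components of `F̃_Δ` are positive, so `f̃_Δ` is smooth there with gradient `(1 + Δ², 1 + Δ²)`.
Since `f = |x₁| + |x₂|` is separable, `∂f(ε, 0) = ∂|·|(ε) × ∂|·|(0) = {1} × [-1, 1]`, and the
second coordinates of `(1, -1)` and `(1 + Δ², 1 + Δ²)` differ by `2 + Δ²`. -/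

section InnerGradient

variable {F : Type*} [NormedAddCommGroup F] [InnerProductSpace ℝ F] [CompleteSpace F]

theorem hasGradientAt_inner_left (v x : F) : HasGradientAt (fun y => inner ℝ v y) v x := by
  rw [hasGradientAt_iff_hasFDerivAt]
  exact (InnerProductSpace.toDual ℝ F v).hasFDerivAt

theorem gradient_inner_left (v x : F) : gradient (fun y => inner ℝ v y) x = v :=
  (hasGradientAt_inner_left v x).gradient

theorem HasGradientAt.add {f g : F → ℝ} {f' g' x : F} (hf : HasGradientAt f f' x)
    (hg : HasGradientAt g g' x) : HasGradientAt (fun y => f y + g y) (f' + g') x := by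
  rw [hasGradientAt_iff_hasFDerivAt, map_add]
  exact hf.hasFDerivAt.add hg.hasFDerivAt

theorem HasGradientAt.abs_of_pos {f : F → ℝ} {f' x : F} (hf : HasGradientAt f f' x)
    (hpos : 0 < f x) : HasGradientAt (fun y => |f y|) f' x :=
  HasFDerivAt.abs_of_pos hf hpos

end InnerGradient

theorem abs_inner_sub_inner_le_sq {F : Type*} [NormedAddCommGroup F] [InnerProductSpace ℝ F]
    {u w y : F} {Δ : ℝ} (hΔ : Δ ≤ 1) (huw : ‖u - w‖ ≤ Δ ^ 2) (hy : ‖y‖ < Δ) :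
    |inner ℝ u y - inner ℝ w y| ≤ Δ ^ 2 := by
  have hΔ0 : 0 ≤ Δ := (norm_nonneg y).trans hy.le
  calc |inner ℝ u y - inner ℝ w y| = |inner ℝ (u - w) y| := by rw [inner_sub_left]
    _ ≤ ‖u - w‖ * ‖y‖ := abs_real_inner_le_norm _ _
    _ ≤ Δ ^ 2 * 1 := by gcongr; linarith
    _ = Δ ^ 2 := mul_one _

theorem F11_eq_inner (i : Fin 2) : F11 i = fun y => inner ℝ (EuclideanSpace.single i 1) y := by
  ext y
  simp [F11, EuclideanSpace.inner_single_left]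

theorem Ft11_eq_inner (Δ : ℝ) (i : Fin 2) :
    Ft11 Δ i = fun y =>
      inner ℝ (EuclideanSpace.single i 1 + Δ ^ 2 • EuclideanSpace.single i.rev 1) y := by
  ext y
  fin_cases i <;> simp [Ft11, inner_add_left, inner_smul_left, EuclideanSpace.inner_single_left]

theorem hasGradientAt_Ft11 (Δ : ℝ) (i : Fin 2) (x : EuclideanSpace ℝ (Fin 2)) :
    HasGradientAt (Ft11 Δ i)
      (EuclideanSpace.single i 1 + Δ ^ 2 • EuclideanSpace.single i.rev 1) x := by
  rw [Ft11_eq_inner]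
  exact hasGradientAt_inner_left _ x

theorem Ft11_fully_linear {Δ : ℝ} (hΔ : Δ ∈ Ioo 0 1) (i : Fin 2) {y : EuclideanSpace ℝ (Fin 2)}
    (hy : y ∈ ball 0 Δ) :
    |F11 i y - Ft11 Δ i y| ≤ 1 * Δ ^ 2 ∧
      ‖gradient (F11 i) y - gradient (Ft11 Δ i) y‖ ≤ 1 * Δ := by
  have hdiff : ‖EuclideanSpace.single i (1 : ℝ) -
      (EuclideanSpace.single i 1 + Δ ^ 2 • EuclideanSpace.single i.rev 1)‖ = Δ ^ 2 := by
    simp [norm_smul, PiLp.norm_single]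
  rw [mem_ball_zero_iff] at hy
  rw [(hasGradientAt_Ft11 Δ i y).gradient, F11_eq_inner, gradient_inner_left, Ft11_eq_inner,
    hdiff, one_mul, one_mul]
  exact ⟨abs_inner_sub_inner_le_sq hΔ.2.le hdiff.le hy, by nlinarith [hΔ.1, hΔ.2]⟩

theorem hasGradientAt_ft11 {ε Δ : ℝ} (hε : 0 < ε) (hΔ : Δ ≠ 0) :
    HasGradientAt (ft11 Δ) !₂[1 + Δ ^ 2, 1 + Δ ^ 2] !₂[ε, 0] := by
  have hpos : ∀ i, 0 < Ft11 Δ i !₂[ε, 0] := by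
    intro i
    fin_cases i <;> simp [Ft11] <;> positivity
  have hgrad := ((hasGradientAt_Ft11 Δ 0 _).abs_of_pos (hpos 0)).add
    ((hasGradientAt_Ft11 Δ 1 _).abs_of_pos (hpos 1))
  have hsum : !₂[1 + Δ ^ 2, 1 + Δ ^ 2] =
      EuclideanSpace.single 0 1 + Δ ^ 2 • EuclideanSpace.single (Fin.rev 0) 1 +
        (EuclideanSpace.single 1 1 + Δ ^ 2 • EuclideanSpace.single (Fin.rev 1) (1 : ℝ)) := by
    ext i
    fin_cases i <;> simp [add_comm]
  rw [hsum]
  exact hgrad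

theorem mem_rSubdiff11_separable_iff {φ ψ : ℝ → ℝ} {xbar v : EuclideanSpace ℝ (Fin 2)} :
    v ∈ rSubdiff11 (fun x => φ (x 0) + ψ (x 1)) xbar ↔
      (∀ s, φ (xbar 0) + v 0 * (s - xbar 0) ≤ φ s) ∧
        ∀ t, ψ (xbar 1) + v 1 * (t - xbar 1) ≤ ψ t := by
  simp only [rSubdiff11, Set.mem_ofPred_eq, PiLp.inner_apply, RCLike.inner_apply, conj_trivial,
    Fin.sum_univ_two, PiLp.sub_apply]
  constructor
  · intro h
    refine ⟨fun s => ?_, fun t => ?_⟩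
    · have hs := h !₂[s, xbar 1]
      simp only [Matrix.cons_val_zero, Matrix.cons_val_one, sub_self, zero_mul, add_zero] at hs
      linarith
    · have ht := h !₂[xbar 0, t]
      simp only [Matrix.cons_val_zero, Matrix.cons_val_one, sub_self, zero_mul, zero_add] at ht
      linarith
  · rintro ⟨hφ, hψ⟩ x
    linarith [hφ (x 0), hψ (x 1), mul_comm (v 0) (x 0 - xbar 0), mul_comm (v 1) (x 1 - xbar 1)]

theorem abs_subgradient_iff_of_pos {a c : ℝ} (ha : 0 < a) :
    (∀ s, |a| + c * (s - a) ≤ |s|) ↔ c = 1 := by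
  constructor
  · intro h
    have h0 := h 0
    have h2a := h (2 * a)
    rw [abs_of_pos ha, abs_zero] at h0
    rw [abs_of_pos ha, abs_of_pos (by positivity)] at h2a
    nlinarith
  · rintro rfl s
    linarith [abs_of_pos ha, le_abs_self s]

theorem abs_subgradient_zero_iff {d : ℝ} : (∀ t, d * t ≤ |t|) ↔ d ∈ Icc (-1) 1 := by
  constructor
  · intro h
    have h1 := h 1
    have hm1 := h (-1)
    norm_num at h1 hm1
    exact ⟨by linarith, h1⟩
  · rintro hd t
    calc d * t ≤ |d * t| := le_abs_self _
      _ = |d| * |t| := abs_mul d t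
      _ ≤ 1 * |t| := by gcongr; exact abs_le.mpr hd
      _ = |t| := one_mul _

theorem rSubdiff11_f11 {ε : ℝ} (hε : 0 < ε) :
    rSubdiff11 f11 !₂[ε, 0] = {v | v 0 = 1 ∧ v 1 ∈ Icc (-1 : ℝ) 1} := by
  ext v
  rw [show f11 = fun x => |x 0| + |x 1| from rfl, mem_rSubdiff11_separable_iff]
  simp only [Matrix.cons_val_zero, Matrix.cons_val_one, abs_zero, zero_add, sub_zero,
    abs_subgradient_iff_of_pos hε, abs_subgradient_zero_iff]
  rfl

theorem two_le_dist (Δ : ℝ) :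
    2 ≤ dist (!₂[1, -1] : EuclideanSpace ℝ (Fin 2)) !₂[1 + Δ ^ 2, 1 + Δ ^ 2] :=
  calc (2 : ℝ) ≤ dist (-1 : ℝ) (1 + Δ ^ 2) :=
        Real.dist_eq _ _ ▸ le_abs.mpr (Or.inr (by linarith [sq_nonneg Δ]))
    _ ≤ _ := PiLp.dist_apply_le (!₂[1, -1] : EuclideanSpace ℝ (Fin 2)) !₂[1 + Δ ^ 2, 1 + Δ ^ 2] 1

/-- **Example 4.4** (failure of the subdifferential bound away from `x̄`):
(i) the `Ft11 Δ` are fully linear models of `F11` at `x̄ = (0,0)` with constants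
`κF = κG = 1` on `(0,1)`, and `F̃_Δ(0,0) = F(0,0)`; (ii) `f̃_Δ` is differentiable at
`(ε, 0)` with gradient `(1 + Δ², 1 + Δ²)`; (iii) `∂f(ε,0) = {v : v₁ = 1, v₂ ∈ [−1,1]}`,
so `(1,−1) ∈ ∂f(ε,0)`; (iv) the distance from `(1,−1)` to `(1 + Δ², 1 + Δ²)` is at least
`2`, hence does not converge to `0` as `Δ → 0`. -/
theorem example_failure_away_from_center :
    -- (i) fully linear models agreeing with F at the centre
    ((∀ i, ContDiff ℝ 1 (F11 i)) ∧
      (∀ Δ ∈ Ioo (0:ℝ) 1, (∀ i, ContDiff ℝ 1 (Ft11 Δ i)) ∧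
        ∀ i, ∀ y ∈ ball (0 : EuclideanSpace ℝ (Fin 2)) Δ,
          |F11 i y - Ft11 Δ i y| ≤ 1 * Δ ^ 2 ∧
          ‖gradient (F11 i) y - gradient (Ft11 Δ i) y‖ ≤ 1 * Δ) ∧
      ∀ Δ ∈ Ioo (0:ℝ) 1, ∀ i, Ft11 Δ i 0 = F11 i 0) ∧
    -- (ii) f̃_Δ is differentiable at (ε, 0) with gradient (1 + Δ², 1 + Δ²)
    (∀ ε : ℝ, 0 < ε → ∀ Δ ∈ Ioo (0:ℝ) 1,
      HasGradientAt (ft11 Δ)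
        ((EuclideanSpace.equiv (Fin 2) ℝ).symm ![1 + Δ ^ 2, 1 + Δ ^ 2])
        ((EuclideanSpace.equiv (Fin 2) ℝ).symm ![ε, 0])) ∧
    -- (iii) ∂f(ε,0) = {v : v₁ = 1, v₂ ∈ [−1,1]}, so (1,−1) ∈ ∂f(ε,0)
    (∀ ε : ℝ, 0 < ε →
      rSubdiff11 f11 ((EuclideanSpace.equiv (Fin 2) ℝ).symm ![ε, 0]) =
        {v | v 0 = 1 ∧ v 1 ∈ Icc (-1:ℝ) 1} ∧
      (EuclideanSpace.equiv (Fin 2) ℝ).symm ![1, -1] ∈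
        rSubdiff11 f11 ((EuclideanSpace.equiv (Fin 2) ℝ).symm ![ε, 0])) ∧
    -- (iv) the distance from (1,−1) to (1 + Δ², 1 + Δ²) is at least 2
    (∀ Δ ∈ Ioo (0:ℝ) 1,
      2 ≤ dist ((EuclideanSpace.equiv (Fin 2) ℝ).symm ![1, -1])
        ((EuclideanSpace.equiv (Fin 2) ℝ).symm ![1 + Δ ^ 2, 1 + Δ ^ 2])) ∧
    ¬ Tendsto (fun Δ : ℝ =>
        dist ((EuclideanSpace.equiv (Fin 2) ℝ).symm ![1, -1])
          ((EuclideanSpace.equiv (Fin 2) ℝ).symm ![1 + Δ ^ 2, 1 + Δ ^ 2]))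
      (nhdsWithin 0 (Ioo (0:ℝ) 1)) (nhds 0) := by
  refine ⟨⟨fun i => ?_, fun Δ hΔ => ⟨fun i => ?_, fun i y hy => Ft11_fully_linear hΔ i hy⟩,
    fun Δ _ i => ?_⟩, fun ε hε Δ hΔ => hasGradientAt_ft11 hε hΔ.1.ne',
    fun ε hε => ⟨rSubdiff11_f11 hε, ?_⟩, fun Δ _ => two_le_dist Δ, fun hlim => ?_⟩
  · rw [F11_eq_inner]
    exact contDiff_const.inner ℝ contDiff_id
  · rw [Ft11_eq_inner]
    exact contDiff_const.inner ℝ contDiff_id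
  · rw [F11_eq_inner, Ft11_eq_inner]
    simp
  · exact (Set.ext_iff.mp (rSubdiff11_f11 hε) _).mpr ⟨rfl, by norm_num⟩
  · have := left_nhdsWithin_Ioo_neBot (zero_lt_one' ℝ)
    exact absurd (ge_of_tendsto hlim (Eventually.of_forall two_le_dist)) (by norm_num)
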